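/- T(2,1,2) = (\pi^2/6)\zeta(3) - (3/2)\zeta(5), i.e., \sum_{n,m \ge 1} 1/(n^2 m (n+m)^2) = \zeta(2)\zeta(3) - (3/2)\zeta(5). -/

import Mathlib

/-!
By partial fractions, `1 / (n^a m^b (n+m)^c)` equals
`1 / (n^(a-1) m^b (n+m)^(c+1)) + 1 / (n^a m^(b-1) (n+m)^(c+1))`; this expresses `T(2,1,2)`
as `2 T(1,0,4) + T(2,0,3)`, and `ζ(2) ζ(3) = T(2,3,0)` as `6 T(1,0,4) + 3 T(2,0,3) + T(3,0,2)`.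
Splitting the double sum of `ζ(2) ζ(3)` along `n < m`, `n > m`, `n = m` gives instead
`T(2,0,3) + T(3,0,2) + ζ(5)`. The third relation needed is Euler's `T(3,1,1) = T(1,0,4) + ζ(5)`
(where `T(3,1,1) = T(2,1,2) + T(3,0,2)` by partial fractions): the inner series
`∑ₘ 1 / (m (m+n)) = H_n / n` telescopes, and `∑ₙ H_n / n⁴` is the sum of `1 / (n⁴ m)` over `m ≤ n`.
-/

open Filter Topology

/-- The Tornheim double series with natural number exponents. -/
noncomputable def tornheimN (a b c : ℕ) : ℝ :=
  ∑' n : ℕ+, ∑' m : ℕ+,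
    1 / (((n : ℕ) : ℝ) ^ a * ((m : ℕ) : ℝ) ^ b * (((n : ℕ) + (m : ℕ) : ℕ) : ℝ) ^ c)

theorem hasSum_sub_add_of_antitone {f : ℕ → ℝ} (hf : Antitone f)
    (h0 : Tendsto f atTop (𝓝 0)) (k : ℕ) :
    HasSum (fun m ↦ f m - f (m + k)) (∑ j ∈ Finset.range k, f j) := by
  have hpartial : ∀ M, ∑ m ∈ Finset.range M, (f m - f (m + k))
      = ∑ j ∈ Finset.range k, f j - ∑ j ∈ Finset.range k, f (M + j) := by
    intro M
    have h₁ := Finset.sum_range_add f M k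
    have h₂ := Finset.sum_range_add f k M
    rw [add_comm k M] at h₂
    simp only [Finset.sum_sub_distrib, add_comm _ k]
    linarith
  rw [hasSum_iff_tendsto_nat_of_nonneg (fun m ↦ sub_nonneg.2 (hf (m.le_add_right k)))]
  simp only [hpartial]
  have htail : Tendsto (fun M ↦ ∑ j ∈ Finset.range k, f (M + j)) atTop (𝓝 0) := by
    simpa using tendsto_finsetSum _ fun j _ ↦ h0.comp (tendsto_add_atTop_nat j)
  simpa using tendsto_const_nhds.sub htail

theorem tsum_pnat_one_div_sub_one_div_add (n : ℕ+) :
    ∑' m : ℕ+, (1 / (m : ℝ) - 1 / (m + n)) = ∑' m : ℕ+, if (m : ℕ) ≤ n then 1 / (m : ℝ) else 0 := by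
  have hf : Antitone fun j : ℕ ↦ 1 / ((j : ℝ) + 1) := fun i j hij ↦ by
    simp only
    gcongr
  have htel := (hasSum_sub_add_of_antitone hf tendsto_one_div_add_atTop_nhds_zero_nat n).tsum_eq
  rw [tsum_pnat_eq_tsum_succ (f := fun m ↦ 1 / (m : ℝ) - 1 / (m + n)),
    tsum_pnat_eq_tsum_succ (f := fun m ↦ if m ≤ (n : ℕ) then 1 / (m : ℝ) else 0)]
  push_cast at htel ⊢
  simp_rw [add_right_comm _ ((n : ℕ) : ℝ) 1] at htel
  rw [htel, sum_eq_tsum_indicator]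
  refine tsum_congr fun j ↦ ?_
  simp only [Set.indicator_apply, Finset.mem_coe, Finset.mem_range, Nat.lt_iff_add_one_le]

theorem range_pnat_add_right :
    Set.range (fun p : ℕ+ × ℕ+ ↦ (p.1, p.1 + p.2)) = {p | p.1 < p.2} := by
  ext ⟨a, b⟩
  constructor
  · rintro ⟨⟨x, y⟩, h⟩
    simp only [Prod.mk.injEq] at h
    obtain ⟨rfl, rfl⟩ := h
    exact PNat.lt_add_right _ _
  · intro (h : a < b)
    exact ⟨(a, b - a), by simp [PNat.add_sub_of_lt h]⟩

theorem range_pnat_add_left :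
    Set.range (fun p : ℕ+ × ℕ+ ↦ (p.1 + p.2, p.2)) = {p | p.2 < p.1} := by
  ext ⟨a, b⟩
  constructor
  · rintro ⟨⟨x, y⟩, h⟩
    simp only [Prod.mk.injEq] at h
    obtain ⟨rfl, rfl⟩ := h
    exact PNat.lt_add_left _ _
  · intro (h : b < a)
    exact ⟨(a - b, b), by simp [PNat.sub_add_of_lt h]⟩

theorem tsum_pnat_prod_eq_triangles_add_diag {E : Type*} [NormedAddCommGroup E]
    [CompleteSpace E] {f : ℕ+ × ℕ+ → E} (hf : Summable f) :
    ∑' p, f p = ∑' p : ℕ+ × ℕ+, f (p.1, p.1 + p.2) + ∑' p : ℕ+ × ℕ+, f (p.1 + p.2, p.2)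
      + ∑' n : ℕ+, f (n, n) := by
  have hcover : {p : ℕ+ × ℕ+ | p.1 < p.2} ∪ {p | p.2 < p.1} ∪ Set.diagonal ℕ+ = Set.univ := by
    ext ⟨a, b⟩
    simp only [Set.mem_union, Set.mem_ofPred_eq, Set.mem_diagonal_iff, Set.mem_univ, iff_true]
    rcases lt_trichotomy a b with h | h | h <;> simp [h]
  have hd₁ : Disjoint {p : ℕ+ × ℕ+ | p.1 < p.2} {p | p.2 < p.1} :=
    Set.disjoint_left.2 fun p (h₁ : p.1 < p.2) (h₂ : p.2 < p.1) ↦ lt_asymm h₁ h₂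
  have hd₂ : Disjoint ({p : ℕ+ × ℕ+ | p.1 < p.2} ∪ {p | p.2 < p.1}) (Set.diagonal ℕ+) :=
    Set.disjoint_left.2 fun p h₁ (h₂ : p.1 = p.2) ↦ by
      rcases h₁ with (h : p.1 < p.2) | (h : p.2 < p.1)
      exacts [h.ne h₂, h.ne' h₂]
  have hinj₁ : Function.Injective fun p : ℕ+ × ℕ+ ↦ (p.1, p.1 + p.2) := fun p q h ↦ by
    obtain ⟨h₁, h₂⟩ := Prod.ext_iff.1 h
    dsimp only at h₁ h₂
    rw [h₁] at h₂
    exact Prod.ext h₁ (add_left_cancel h₂)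
  have hinj₂ : Function.Injective fun p : ℕ+ × ℕ+ ↦ (p.1 + p.2, p.2) := fun p q h ↦ by
    obtain ⟨h₁, h₂⟩ := Prod.ext_iff.1 h
    dsimp only at h₁ h₂
    rw [h₂] at h₁
    exact Prod.ext (add_right_cancel h₁) h₂
  rw [← tsum_univ, ← hcover, hf.subtype _ |>.tsum_union_disjoint hd₂ (hf.subtype _),
    hf.subtype _ |>.tsum_union_disjoint hd₁ (hf.subtype _), ← range_pnat_add_right,
    ← range_pnat_add_left, ← Set.range_diag, tsum_range f hinj₁, tsum_range f hinj₂,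
    tsum_range f Function.diag_injective]
  rfl

theorem summable_one_div_pnat_pow {k : ℕ} (hk : 1 < k) : Summable fun n : ℕ+ ↦ 1 / (n : ℝ) ^ k :=
  (Real.summable_one_div_nat_pow.2 hk).comp_injective PNat.coe_injective

theorem riemannZeta_natCast_eq_tsum_pnat {k : ℕ} (hk : 1 < k) :
    riemannZeta k = (∑' n : ℕ+, 1 / (n : ℝ) ^ k : ℝ) := by
  rw [zeta_nat_eq_tsum_of_gt_one hk, Complex.ofReal_tsum,
    ← tsum_pnat_eq_tsum_of_eq_zero (by simp [(zero_lt_one.trans hk).ne'])]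
  push_cast
  rfl

noncomputable def tornheimTerm (a b c : ℕ) (p : ℕ+ × ℕ+) : ℝ :=
  1 / ((p.1 : ℝ) ^ a * (p.2 : ℝ) ^ b * ((p.1 : ℝ) + p.2) ^ c)

theorem tornheimN_eq_tsum_tsum (a b c : ℕ) :
    tornheimN a b c = ∑' n, ∑' m, tornheimTerm a b c (n, m) := by
  simp [tornheimN, tornheimTerm]

theorem tornheimN_eq_tsum {a b c : ℕ} (h : Summable (tornheimTerm a b c)) :
    tornheimN a b c = ∑' p, tornheimTerm a b c p := by
  rw [tornheimN_eq_tsum_tsum, h.tsum_prod]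

theorem tornheimN_zero_right (a b : ℕ) :
    tornheimN a b 0 = (∑' n : ℕ+, 1 / (n : ℝ) ^ a) * ∑' m : ℕ+, 1 / (m : ℝ) ^ b := by
  rw [tornheimN_eq_tsum_tsum, ← tsum_mul_right]
  refine tsum_congr fun n ↦ ?_
  rw [← tsum_mul_left]
  refine tsum_congr fun m ↦ ?_
  rw [tornheimTerm, pow_zero, mul_one, one_div_mul_one_div]

theorem tornheimTerm_le (a b c₁ c₂ : ℕ) (p : ℕ+ × ℕ+) :
    tornheimTerm a b (c₁ + c₂) p ≤ 1 / (p.1 : ℝ) ^ (a + c₁) * (1 / (p.2 : ℝ) ^ (b + c₂)) := by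
  have hx : (0 : ℝ) < p.1 := by positivity
  have hy : (0 : ℝ) < p.2 := by positivity
  rw [tornheimTerm, div_mul_div_comm, one_mul]
  apply one_div_le_one_div_of_le (by positivity)
  calc (p.1 : ℝ) ^ (a + c₁) * (p.2 : ℝ) ^ (b + c₂)
      = (p.1 : ℝ) ^ a * (p.2 : ℝ) ^ b * ((p.1 : ℝ) ^ c₁ * (p.2 : ℝ) ^ c₂) := by ring
    _ ≤ (p.1 : ℝ) ^ a * (p.2 : ℝ) ^ b * (((p.1 : ℝ) + p.2) ^ c₁ * ((p.1 : ℝ) + p.2) ^ c₂) := by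
      gcongr <;> linarith
    _ = (p.1 : ℝ) ^ a * (p.2 : ℝ) ^ b * ((p.1 : ℝ) + p.2) ^ (c₁ + c₂) := by ring

theorem summable_tornheimTerm {a b c : ℕ} (h : 2 ≤ a + c ∧ 2 ≤ b + c ∧ 4 ≤ a + b + c) :
    Summable (tornheimTerm a b c) := by
  obtain ⟨c₁, c₂, rfl, ha, hb⟩ : ∃ c₁ c₂, c = c₁ + c₂ ∧ 1 < a + c₁ ∧ 1 < b + c₂ :=
    ⟨min c (2 - a), c - min c (2 - a), by omega, by omega, by omega⟩
  refine .of_nonneg_of_le (fun p ↦ by unfold tornheimTerm; positivity) (tornheimTerm_le a b c₁ c₂)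
    ((summable_one_div_pnat_pow ha).mul_of_nonneg (summable_one_div_pnat_pow hb)
      (fun _ ↦ by positivity) (fun _ ↦ by positivity))

theorem tornheimN_comm {a b c : ℕ} (h : 2 ≤ a + c ∧ 2 ≤ b + c ∧ 4 ≤ a + b + c) :
    tornheimN a b c = tornheimN b a c := by
  have hswap : tornheimTerm b a c = tornheimTerm a b c ∘ Equiv.prodComm ℕ+ ℕ+ := by
    ext p
    simp only [tornheimTerm, Function.comp_apply, Equiv.prodComm_apply, Prod.fst_swap,
      Prod.snd_swap]
    ring
  have hs := summable_tornheimTerm h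
  rw [tornheimN_eq_tsum hs, tornheimN_eq_tsum (hswap ▸ (Equiv.summable_iff _).2 hs), hswap]
  exact ((Equiv.prodComm ℕ+ ℕ+).tsum_eq _).symm

theorem tornheimTerm_succ_succ (a b c : ℕ) :
    tornheimTerm (a + 1) (b + 1) c
      = tornheimTerm a (b + 1) (c + 1) + tornheimTerm (a + 1) b (c + 1) := by
  ext p
  have hx : (0 : ℝ) < p.1 := by positivity
  have hy : (0 : ℝ) < p.2 := by positivity
  simp only [tornheimTerm, Pi.add_apply]
  field_simp
  ring

theorem tornheimN_succ_succ {a b c : ℕ} (h : 1 ≤ a + c ∧ 1 ≤ b + c ∧ 2 ≤ a + b + c) :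
    tornheimN (a + 1) (b + 1) c = tornheimN a (b + 1) (c + 1) + tornheimN (a + 1) b (c + 1) := by
  have h₁ := summable_tornheimTerm (a := a) (b := b + 1) (c := c + 1) (by omega)
  have h₂ := summable_tornheimTerm (a := a + 1) (b := b) (c := c + 1) (by omega)
  rw [tornheimN_eq_tsum h₁, tornheimN_eq_tsum h₂, ← h₁.tsum_add h₂,
    tornheimN_eq_tsum (tornheimTerm_succ_succ a b c ▸ h₁.add h₂), tornheimTerm_succ_succ]
  rfl

theorem tornheimN_stuffle {a b : ℕ} (ha : 2 ≤ a) (hb : 2 ≤ b) :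
    tornheimN a b 0 = tornheimN a 0 b + tornheimN 0 b a + ∑' n : ℕ+, 1 / (n : ℝ) ^ (a + b) := by
  have h : Summable (tornheimTerm a b 0) := summable_tornheimTerm (by omega)
  rw [tornheimN_eq_tsum h, tsum_pnat_prod_eq_triangles_add_diag h,
    tornheimN_eq_tsum (summable_tornheimTerm (a := a) (b := 0) (c := b) (by omega)),
    tornheimN_eq_tsum (summable_tornheimTerm (a := 0) (b := b) (c := a) (by omega))]
  have hupper (p : ℕ+ × ℕ+) : tornheimTerm a b 0 (p.1, p.1 + p.2) = tornheimTerm a 0 b p := by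
    simp only [tornheimTerm, PNat.add_coe, Nat.cast_add]
    ring
  have hlower (p : ℕ+ × ℕ+) : tornheimTerm a b 0 (p.1 + p.2, p.2) = tornheimTerm 0 b a p := by
    simp only [tornheimTerm, PNat.add_coe, Nat.cast_add]
    ring
  have hdiag (n : ℕ+) : tornheimTerm a b 0 (n, n) = 1 / (n : ℝ) ^ (a + b) := by
    simp only [tornheimTerm]
    ring
  simp only [hupper, hlower, hdiag]

noncomputable def eulerSumTerm (k : ℕ) (p : ℕ+ × ℕ+) : ℝ :=
  if (p.2 : ℕ) ≤ p.1 then 1 / ((p.1 : ℝ) ^ k * p.2) else 0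

theorem tsum_tornheimTerm_one_one (k : ℕ) (n : ℕ+) :
    ∑' m, tornheimTerm k 1 1 (n, m) = ∑' m, eulerSumTerm (k + 1) (n, m) := by
  have hn : (0 : ℝ) < n := by positivity
  calc ∑' m, tornheimTerm k 1 1 (n, m)
      = ∑' m : ℕ+, 1 / (n : ℝ) ^ (k + 1) * (1 / (m : ℝ) - 1 / (m + n)) :=
        tsum_congr fun m ↦ by
          have hm : (0 : ℝ) < m := by positivity
          simp only [tornheimTerm]
          field_simp
          ring
    _ = ∑' m : ℕ+, 1 / (n : ℝ) ^ (k + 1) * (if (m : ℕ) ≤ n then 1 / (m : ℝ) else 0) := by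
        rw [tsum_mul_left, tsum_mul_left, tsum_pnat_one_div_sub_one_div_add]
    _ = ∑' m, eulerSumTerm (k + 1) (n, m) := tsum_congr fun m ↦ by
        simp only [eulerSumTerm]
        split_ifs <;> simp [field]

theorem eulerSumTerm_le (k : ℕ) (p : ℕ+ × ℕ+) :
    eulerSumTerm (k + 1) p ≤ 2 * tornheimTerm k 1 1 p := by
  have hx : (0 : ℝ) < p.1 := by positivity
  have hy : (0 : ℝ) < p.2 := by positivity
  simp only [eulerSumTerm, tornheimTerm]
  split_ifs with h
  · have hxy : (p.1 : ℝ) + p.2 ≤ 2 * p.1 := by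
      have : (p.2 : ℝ) ≤ p.1 := by exact_mod_cast h
      linarith
    have := mul_le_mul_of_nonneg_left hxy (by positivity : (0 : ℝ) ≤ (p.1 : ℝ) ^ k * p.2)
    rw [mul_one_div, div_le_div_iff₀ (by positivity) (by positivity), pow_one, pow_one, pow_succ]
    linarith
  · positivity

theorem tornheimN_one_one {k : ℕ} (hk : 2 ≤ k) :
    tornheimN k 1 1 = tornheimN 0 1 (k + 1) + ∑' n : ℕ+, 1 / (n : ℝ) ^ (k + 2) := by
  have hg : Summable (eulerSumTerm (k + 1)) :=
    .of_nonneg_of_le (fun p ↦ by unfold eulerSumTerm; split_ifs <;> positivity)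
      (eulerSumTerm_le k) ((summable_tornheimTerm (by omega)).mul_left 2)
  rw [tornheimN_eq_tsum_tsum, tsum_congr (tsum_tornheimTerm_one_one k), ← hg.tsum_prod,
    tsum_pnat_prod_eq_triangles_add_diag hg, tornheimN_eq_tsum (summable_tornheimTerm (by omega))]
  have hupper (p : ℕ+ × ℕ+) : eulerSumTerm (k + 1) (p.1, p.1 + p.2) = 0 := if_neg (by simp)
  have hlower (p : ℕ+ × ℕ+) :
      eulerSumTerm (k + 1) (p.1 + p.2, p.2) = tornheimTerm 0 1 (k + 1) p := by
    rw [eulerSumTerm, if_pos (by simp), tornheimTerm]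
    push_cast
    ring
  have hdiag (n : ℕ+) : eulerSumTerm (k + 1) (n, n) = 1 / (n : ℝ) ^ (k + 2) := by
    rw [eulerSumTerm, if_pos le_rfl]
    ring
  simp only [hupper, hlower, hdiag, tsum_zero, zero_add]

theorem tornheimN_two_one_two :
    tornheimN 2 1 2 = 2 * tornheimN 1 0 4 + tornheimN 2 0 3 := by
  have h₁ : tornheimN 2 1 2 = tornheimN 1 1 3 + tornheimN 2 0 3 :=
    tornheimN_succ_succ (a := 1) (b := 0) (c := 2) (by decide)
  have h₂ : tornheimN 1 1 3 = tornheimN 0 1 4 + tornheimN 1 0 4 :=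
    tornheimN_succ_succ (a := 0) (b := 0) (c := 3) (by decide)
  have hs : tornheimN 0 1 4 = tornheimN 1 0 4 := tornheimN_comm (by decide)
  linarith

theorem tornheimN_two_three_zero :
    tornheimN 2 3 0 = 6 * tornheimN 1 0 4 + 3 * tornheimN 2 0 3 + tornheimN 3 0 2 := by
  have h₁ : tornheimN 2 3 0 = tornheimN 1 3 1 + tornheimN 2 2 1 :=
    tornheimN_succ_succ (a := 1) (b := 2) (c := 0) (by decide)
  have h₂ : tornheimN 1 3 1 = tornheimN 0 3 2 + tornheimN 1 2 2 :=
    tornheimN_succ_succ (a := 0) (b := 2) (c := 1) (by decide)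
  have h₃ : tornheimN 2 2 1 = tornheimN 1 2 2 + tornheimN 2 1 2 :=
    tornheimN_succ_succ (a := 1) (b := 1) (c := 1) (by decide)
  have h₄ : tornheimN 1 2 2 = tornheimN 0 2 3 + tornheimN 1 1 3 :=
    tornheimN_succ_succ (a := 0) (b := 1) (c := 2) (by decide)
  have h₅ : tornheimN 1 1 3 = tornheimN 0 1 4 + tornheimN 1 0 4 :=
    tornheimN_succ_succ (a := 0) (b := 0) (c := 3) (by decide)
  have hs₁ : tornheimN 0 3 2 = tornheimN 3 0 2 := tornheimN_comm (by decide)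
  have hs₂ : tornheimN 0 2 3 = tornheimN 2 0 3 := tornheimN_comm (by decide)
  have hs₃ : tornheimN 0 1 4 = tornheimN 1 0 4 := tornheimN_comm (by decide)
  linarith [tornheimN_two_one_two]

theorem tornheim_212 :
    ((tornheimN 2 1 2 : ℝ) : ℂ)
      = ((Real.pi : ℂ) ^ 2 / 6) * riemannZeta 3 - (3 / 2) * riemannZeta 5 := by
  have hstuffle :
      tornheimN 2 3 0 = tornheimN 2 0 3 + tornheimN 0 3 2 + ∑' n : ℕ+, 1 / (n : ℝ) ^ 5 :=
    tornheimN_stuffle le_rfl (by norm_num)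
  have heuler : tornheimN 3 1 1 = tornheimN 0 1 4 + ∑' n : ℕ+, 1 / (n : ℝ) ^ 5 :=
    tornheimN_one_one (k := 3) (by norm_num)
  have hpf : tornheimN 3 1 1 = tornheimN 2 1 2 + tornheimN 3 0 2 :=
    tornheimN_succ_succ (a := 2) (b := 0) (c := 1) (by decide)
  have hs₁ : tornheimN 0 1 4 = tornheimN 1 0 4 := tornheimN_comm (by decide)
  have hs₂ : tornheimN 0 3 2 = tornheimN 3 0 2 := tornheimN_comm (by decide)
  have hreal : tornheimN 2 1 2 = (∑' n : ℕ+, 1 / (n : ℝ) ^ 2) * (∑' n : ℕ+, 1 / (n : ℝ) ^ 3)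
      - 3 / 2 * ∑' n : ℕ+, 1 / (n : ℝ) ^ 5 := by
    linarith [tornheimN_two_one_two, tornheimN_two_three_zero, tornheimN_zero_right 2 3]
  have h₂ := riemannZeta_natCast_eq_tsum_pnat (k := 2) (by norm_num)
  have h₃ := riemannZeta_natCast_eq_tsum_pnat (k := 3) (by norm_num)
  have h₅ := riemannZeta_natCast_eq_tsum_pnat (k := 5) (by norm_num)
  simp only [Nat.cast_ofNat] at h₂ h₃ h₅
  rw [← riemannZeta_two, h₂, h₃, h₅, hreal]
  push_cast
  ring
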